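/- Let G be an r-regular simple graph with n vertices and m edges, where r ≥ 2 (so that m ≥ n), and let q_1 ≤ q_2 ≤ … ≤ q_n = 2r be the eigenvalues of Q(G) listed with multiplicity. Then f(λ, G^{01+}) = [(λ-r)(λ-2m) - 2r]·(λ-m)^{m-n}·∏_{i=1}^{n-1}[(λ-r)(λ-m) - q_i]. -/

import Mathlib

open Classical

/-- The four symbols `0, 1, +, -` used in `xyz`-transformations. -/
inductive XYZ : Type
  | zero | one | plus | minus

namespace XYZ

/-- The relation on the vertices of a graph `H` given by a symbol:
`0` gives the empty graph, `1` the complete graph, `+` the graph itself,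
`-` its complement. -/
def rel {W : Type*} (H : SimpleGraph W) : XYZ → W → W → Prop
  | .zero => fun _ _ => False
  | .one  => fun u v => u ≠ v
  | .plus => fun u v => H.Adj u v
  | .minus => fun u v => u ≠ v ∧ ¬ H.Adj u v

/-- The incidence relation between a vertex and an edge given by a symbol `z`:
`+` means incident, `-` means non-incident, `0` never, `1` always. -/
def inc {W : Type*} (G : SimpleGraph W) : XYZ → W → G.edgeSet → Prop
  | .zero => fun _ _ => False
  | .one  => fun _ _ => True
  | .plus => fun v e => v ∈ (e : Sym2 W)
  | .minus => fun v e => v ∉ (e : Sym2 W)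

theorem rel_symm {W : Type*} (H : SimpleGraph W) (x : XYZ) {u v : W}
    (h : rel H x u v) : rel H x v u := by
  cases x with
  | zero => exact h.elim
  | one => exact (h : u ≠ v).symm
  | plus => exact H.adj_symm h
  | minus => exact ⟨(h.1).symm, fun h' => h.2 (H.adj_symm h')⟩

theorem rel_irrefl {W : Type*} (H : SimpleGraph W) (x : XYZ) {u : W}
    (h : rel H x u u) : False := by
  cases x with
  | zero => exact h
  | one => exact h rfl
  | plus => exact H.irrefl h
  | minus => exact h.1 rfl

end XYZ

/-- The `xyz`-transformation `G^{xyz}` of a graph `G`: its vertex set is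
`V(G) ⊕ E(G)`; two vertices of `G` are adjacent according to the symbol `x`
(applied to `G`), two edges according to the symbol `y` (applied to the line
graph of `G`), and a vertex and an edge according to the symbol `z`
(`+` = incidence graph `B(G)`, `-` = non-incidence graph `B^c(G)`,
`0` = no vertex-edge edges, `1` = all vertex-edge edges). -/
def xyzTransform {V : Type*} (G : SimpleGraph V) (x y z : XYZ) :
    SimpleGraph (V ⊕ G.edgeSet) where
  Adj a b :=
    match a, b with
    | Sum.inl u, Sum.inl v => XYZ.rel G x u v
    | Sum.inr e, Sum.inr f => XYZ.rel G.lineGraph y e f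
    | Sum.inl v, Sum.inr e => XYZ.inc G z v e
    | Sum.inr e, Sum.inl v => XYZ.inc G z v e
  symm := by
    refine ⟨?_⟩
    rintro (u | e) (v | f) h
    · exact XYZ.rel_symm G x h
    · exact h
    · exact h
    · exact XYZ.rel_symm G.lineGraph y h
  loopless := by
    refine ⟨?_⟩
    rintro (u | e) h
    · exact XYZ.rel_irrefl G x h
    · exact XYZ.rel_irrefl G.lineGraph y h

/-- The signless Laplacian matrix `Q(G) = D(G) + A(G)` of a graph. -/
noncomputable def signlessLaplacian {V : Type*} [Fintype V] (G : SimpleGraph V) :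
    Matrix V V ℝ :=
  Matrix.of fun u v =>
    (if u = v then (G.degree u : ℝ) else 0) + (if G.Adj u v then 1 else 0)

/-- The signless Laplacian characteristic polynomial
`f(λ, G) = det (λ I - Q(G))`, evaluated at a real number `λ`. -/
noncomputable def fQ {V : Type*} [Fintype V] (G : SimpleGraph V) (lam : ℝ) : ℝ :=
  Matrix.det (lam • (1 : Matrix V V ℝ) - signlessLaplacian G)

/-!
Let `B` be the vertex–edge incidence matrix of `G`, so that `Q(G) = B Bᵀ` and, ordering the
vertices of `G^{01+}` as `V(G) ⊕ E(G)`, `Q(G^{01+}) = [[r I, B], [Bᵀ, m I + J]]`.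
The Schur complement of the vertex block reduces `f(λ, G^{01+})` to
`(λ - r)^n det (N - J)` with `N = (λ - m) I - (λ - r)⁻¹ BᵀB`. As `BᵀB 𝟙 = 2r 𝟙`, the rank-one
term `J` only contributes the factor `1 - m / ((λ - m) - 2r / (λ - r))`, and
`det (t I - BᵀB) = t^{m-n} det (t I - B Bᵀ) = t^{m-n} f(t, G)` at `t = (λ - r)(λ - m)`.
The factor `(λ - r)(λ - m) - 2r` so produced is the one belonging to `q_n = 2r`.
This argument needs `λ ≠ r` and `(λ - r)(λ - m) ≠ 2r`, which hold for all large `λ`;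
both sides being polynomials in `λ`, they agree everywhere.
-/

open Matrix

theorem Fin.prod_univ_eq_prod_castLE_mul {M : Type*} [CommMonoid M] {n : ℕ} (hn : 0 < n)
    (f : Fin n → M) :
    ∏ i, f i = (∏ i : Fin (n - 1), f (Fin.castLE (Nat.sub_le n 1) i)) * f ⟨n - 1, by omega⟩ := by
  obtain ⟨k, rfl⟩ := Nat.exists_eq_add_of_lt hn
  exact Fin.prod_univ_castSucc f

open Polynomial in
theorem Polynomial.eq_of_forall_lt_eval_eq {R : Type*} [CommRing R] [IsDomain R] [Preorder R]
    [NoMaxOrder R] {p q : R[X]} (c : R) (h : ∀ x, c < x → p.eval x = q.eval x) : p = q :=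
  eq_of_infinite_eval_eq p q ((Set.Ioi_infinite c).mono h)

namespace Matrix

variable {m n R K : Type*} [Fintype m] [Fintype n] [DecidableEq m] [DecidableEq n]

theorem det_smul_one_sub_mul_comm_of_le [CommRing R] (A : Matrix m n R) (B : Matrix n m R)
    (hle : Fintype.card n ≤ Fintype.card m) (t : R) :
    (t • 1 - A * B).det = t ^ (Fintype.card m - Fintype.card n) * (t • 1 - B * A).det := by
  simpa [eval_charpoly, scalar_apply, smul_one_eq_diagonal] using
    congrArg (Polynomial.eval t) (charpoly_mul_comm_of_le A B hle)

theorem det_fromBlocks_smul_one₁₁ [Field K] {a : K} (ha : a ≠ 0) (B : Matrix m n K)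
    (C : Matrix n m K) (D : Matrix n n K) :
    (fromBlocks (a • 1) B C D).det = a ^ Fintype.card m * (D - a⁻¹ • (C * B)).det := by
  have hinv : (a • 1 : Matrix m m K) * (a⁻¹ • 1) = 1 := by
    rw [smul_mul_smul_comm, mul_inv_cancel₀ ha, one_mul, one_smul]
  have : Invertible (a • 1 : Matrix m m K) := invertibleOfRightInverse _ _ hinv
  rw [det_fromBlocks₁₁, invOf_eq_right_inv hinv, det_smul, det_one, mul_one, Matrix.mul_smul,
    Matrix.mul_one, Matrix.smul_mul]

theorem det_sub_vecMulVec_one [Field K] {N : Matrix n n K} {α : K} (hN : N *ᵥ 1 = α • 1)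
    (hα : α ≠ 0) : (N - vecMulVec 1 1).det = (1 - Fintype.card n / α) * N.det := by
  have hfac : N - vecMulVec 1 1 = N * (1 + vecMulVec (-α⁻¹ • 1) 1) := by
    rw [Matrix.mul_add, Matrix.mul_one, mul_vecMulVec, mulVec_smul, hN, smul_smul,
      neg_mul, inv_mul_cancel₀ hα, neg_smul, one_smul, neg_vecMulVec, sub_eq_add_neg]
  rw [hfac, det_mul, vecMulVec_eq Unit, det_one_add_replicateCol_mul_replicateRow, mul_comm]
  simp [div_eq_mul_inv, sub_eq_add_neg, mul_comm]

end Matrix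

section SignlessLaplacian

variable {W : Type*} [Fintype W] [DecidableEq W] (H : SimpleGraph W)

-- `fQ` is defined with the classical `DecidableEq` instance; this restates it for any other.
theorem fQ_eq_det (x : ℝ) : fQ H x = (x • (1 : Matrix W W ℝ) - signlessLaplacian H).det := by
  unfold fQ
  congr
  exact Subsingleton.elim _ _

theorem fQ_eq_eval_charpoly (x : ℝ) : fQ H x = (signlessLaplacian H).charpoly.eval x := by
  rw [eval_charpoly, scalar_apply, ← smul_one_eq_diagonal, fQ_eq_det]

theorem signlessLaplacian_eq_diagonal_add_adjMatrix :
    signlessLaplacian H = diagonal (H.adjMatrix ℝ *ᵥ 1) + H.adjMatrix ℝ := by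
  ext u v
  by_cases h : u = v
  · subst h
    simp [signlessLaplacian]
  · simp [signlessLaplacian, h]

end SignlessLaplacian

namespace SimpleGraph

variable {V : Type*} (G : SimpleGraph V)

noncomputable def edgeIncMatrix : Matrix V G.edgeSet ℝ :=
  (G.incMatrix ℝ).submatrix id Subtype.val

theorem adjMatrix_xyzTransform_zero_one_plus :
    (xyzTransform G .zero .one .plus).adjMatrix ℝ =
      fromBlocks 0 G.edgeIncMatrix G.edgeIncMatrixᵀ (vecMulVec 1 1 - 1) := by
  ext (u | e) (v | f) <;> rw [adjMatrix_apply]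
  · simp [xyzTransform, XYZ.rel]
  · simp [xyzTransform, XYZ.inc, edgeIncMatrix, incMatrix_apply', incidenceSet]
    congr
  · simp [xyzTransform, XYZ.inc, edgeIncMatrix, incMatrix_apply', incidenceSet]
    congr
  · by_cases h : e = f
    · subst h
      simp [xyzTransform, XYZ.rel]
    · simp [xyzTransform, XYZ.rel, h, one_apply]

variable [Fintype V]

theorem sum_edgeSet_eq_sum_sym2 {M : Type*} [AddCommMonoid M] {f : Sym2 V → M}
    (hf : ∀ e ∉ G.edgeSet, f e = 0) : ∑ e : G.edgeSet, f e = ∑ e, f e := by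
  rw [← Finset.sum_subtype G.edgeFinset (fun _ => mem_edgeFinset)]
  exact Finset.sum_subset (Finset.subset_univ _) fun e _ he => hf e (by simpa using he)

theorem sum_edgeSet_incMatrix_mul (v : V) (g : Sym2 V → ℝ) :
    ∑ e : G.edgeSet, G.incMatrix ℝ v e * g e = ∑ e, G.incMatrix ℝ v e * g e :=
  G.sum_edgeSet_eq_sum_sym2 (f := fun e => G.incMatrix ℝ v e * g e) fun e he => by
    rw [incMatrix_of_notMem_incidenceSet _ fun h => he h.1, zero_mul]

theorem edgeIncMatrix_mul_transpose :
    G.edgeIncMatrix * G.edgeIncMatrixᵀ = signlessLaplacian G := by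
  ext u v
  calc (G.edgeIncMatrix * G.edgeIncMatrixᵀ) u v
      = ∑ e : G.edgeSet, G.incMatrix ℝ u e * G.incMatrix ℝ v e := rfl
    _ = (G.incMatrix ℝ * (G.incMatrix ℝ)ᵀ) u v := G.sum_edgeSet_incMatrix_mul u _
    _ = signlessLaplacian G u v := by
      rw [incMatrix_mul_transpose]
      by_cases h : u = v
      · subst h
        simp [signlessLaplacian]
      · simp [signlessLaplacian, h]

theorem edgeIncMatrix_mulVec_one : G.edgeIncMatrix *ᵥ 1 = fun v => (G.degree v : ℝ) := by
  ext v
  rw [← G.sum_incMatrix_apply (R := ℝ)]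
  simpa [mulVec, dotProduct, edgeIncMatrix] using G.sum_edgeSet_incMatrix_mul v 1

theorem edgeIncMatrix_transpose_mulVec_one : G.edgeIncMatrixᵀ *ᵥ 1 = 2 := by
  ext e
  simpa [mulVec, dotProduct, edgeIncMatrix] using G.sum_incMatrix_apply_of_mem_edgeSet e.2

variable {G} {r : ℕ}

theorem IsRegularOfDegree.card_mul_eq_two_mul_card_edgeSet (hreg : G.IsRegularOfDegree r) :
    Fintype.card V * r = 2 * Fintype.card G.edgeSet := by
  rw [← edgeFinset_card, ← G.sum_degrees_eq_twice_card_edges,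
    Finset.sum_congr rfl fun v _ => hreg.degree_eq v, Finset.sum_const, smul_eq_mul,
    Finset.card_univ]

theorem edgeIncMatrix_transpose_mul_mulVec_one (hreg : G.IsRegularOfDegree r) :
    (G.edgeIncMatrixᵀ * G.edgeIncMatrix) *ᵥ 1 = (2 * r : ℝ) • 1 := by
  have hdeg : G.edgeIncMatrix *ᵥ 1 = (r : ℝ) • 1 := by
    ext v
    simp [edgeIncMatrix_mulVec_one, hreg v]
  rw [← mulVec_mulVec, hdeg, mulVec_smul, edgeIncMatrix_transpose_mulVec_one]
  ext
  simp [mul_comm]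

theorem signlessLaplacian_xyzTransform_zero_one_plus (hreg : G.IsRegularOfDegree r) :
    signlessLaplacian (xyzTransform G .zero .one .plus) =
      fromBlocks ((r : ℝ) • 1) G.edgeIncMatrix G.edgeIncMatrixᵀ
        ((Fintype.card G.edgeSet : ℝ) • 1 + vecMulVec 1 1) := by
  rw [signlessLaplacian_eq_diagonal_add_adjMatrix, adjMatrix_xyzTransform_zero_one_plus,
    fromBlocks_mulVec, ← fromBlocks_diagonal, fromBlocks_add]
  congr 1
  · ext u v
    simp [one_apply, diagonal_apply, edgeIncMatrix_mulVec_one, hreg u]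
  · simp
  · simp
  · ext e f
    rw [Pi.one_comp, Pi.one_comp, edgeIncMatrix_transpose_mulVec_one, sub_mulVec,
      vecMulVec_mulVec, one_mulVec]
    by_cases h : e = f
    · subst h
      simp [one_apply]
      ring
    · simp [one_apply, h]

theorem det_smul_one_sub_edgeIncMatrix_transpose_mul
    (hle : Fintype.card V ≤ Fintype.card G.edgeSet) (t : ℝ) :
    (t • 1 - G.edgeIncMatrixᵀ * G.edgeIncMatrix).det =
      t ^ (Fintype.card G.edgeSet - Fintype.card V) * fQ G t := by
  rw [det_smul_one_sub_mul_comm_of_le _ _ hle, edgeIncMatrix_mul_transpose, fQ_eq_det]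

theorem fQ_xyzTransform_zero_one_plus_eq_det (hreg : G.IsRegularOfDegree r) (x : ℝ) :
    fQ (xyzTransform G .zero .one .plus) x =
      (fromBlocks ((x - r) • 1) (-G.edgeIncMatrix) (-G.edgeIncMatrixᵀ)
        ((x - Fintype.card G.edgeSet) • 1 - vecMulVec 1 1)).det := by
  rw [fQ_eq_det, signlessLaplacian_xyzTransform_zero_one_plus hreg, ← fromBlocks_one,
    fromBlocks_smul, sub_eq_add_neg, fromBlocks_neg, fromBlocks_add]
  congr 2 <;> module

theorem mul_fQ_xyzTransform_zero_one_plus (hreg : G.IsRegularOfDegree r)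
    (hle : Fintype.card V ≤ Fintype.card G.edgeSet) {x : ℝ} (hx : x - r ≠ 0)
    (hs : (x - r) * (x - Fintype.card G.edgeSet) - 2 * r ≠ 0) :
    ((x - r) * (x - Fintype.card G.edgeSet) - 2 * r) * fQ (xyzTransform G .zero .one .plus) x =
      ((x - r) * (x - 2 * Fintype.card G.edgeSet) - 2 * r) *
        (x - Fintype.card G.edgeSet) ^ (Fintype.card G.edgeSet - Fintype.card V) *
          fQ G ((x - r) * (x - Fintype.card G.edgeSet)) := by
  set α := (x - Fintype.card G.edgeSet) - (x - r)⁻¹ * (2 * r)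
  have hsα : (x - r) * (x - Fintype.card G.edgeSet) - 2 * r = (x - r) * α := by
    simp only [α, mul_sub, mul_inv_cancel_left₀ hx]
  have hα : α ≠ 0 := by
    rintro h
    rw [h, mul_zero] at hsα
    exact hs hsα
  have hN : ((x - Fintype.card G.edgeSet) • 1 - (x - r)⁻¹ •
      (G.edgeIncMatrixᵀ * G.edgeIncMatrix)) *ᵥ 1 = α • 1 := by
    rw [sub_mulVec, smul_mulVec, one_mulVec, smul_mulVec,
      edgeIncMatrix_transpose_mul_mulVec_one hreg, smul_smul, ← sub_smul]
  have hfactor : (x - Fintype.card G.edgeSet) • (1 : Matrix G.edgeSet G.edgeSet ℝ) -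
      (x - r)⁻¹ • (G.edgeIncMatrixᵀ * G.edgeIncMatrix) = (x - r)⁻¹ •
        (((x - r) * (x - Fintype.card G.edgeSet)) • 1 - G.edgeIncMatrixᵀ * G.edgeIncMatrix) := by
    rw [smul_sub, smul_smul, inv_mul_cancel_left₀ hx]
  have hcoef : ((x - r) * (x - Fintype.card G.edgeSet) - 2 * r) *
      (1 - Fintype.card G.edgeSet / α) = (x - r) * (x - 2 * Fintype.card G.edgeSet) - 2 * r := by
    rw [hsα, mul_assoc, mul_sub, mul_one, mul_div_cancel₀ _ hα]
    simp only [α, mul_sub, mul_inv_cancel_left₀ hx]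
    ring
  have hpow : (x - r) ^ Fintype.card V * ((x - r)⁻¹ ^ Fintype.card G.edgeSet *
      ((x - r) * (x - Fintype.card G.edgeSet)) ^ (Fintype.card G.edgeSet - Fintype.card V)) =
        (x - Fintype.card G.edgeSet) ^ (Fintype.card G.edgeSet - Fintype.card V) := by
    obtain ⟨k, hk⟩ := Nat.exists_eq_add_of_le hle
    rw [hk, Nat.add_sub_cancel_left, pow_add, mul_pow, inv_pow, inv_pow]
    field_simp
  rw [fQ_xyzTransform_zero_one_plus_eq_det hreg, det_fromBlocks_smul_one₁₁ hx, Matrix.neg_mul,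
    Matrix.mul_neg, neg_neg, sub_right_comm, det_sub_vecMulVec_one hN hα, hfactor, det_smul,
    det_smul_one_sub_edgeIncMatrix_transpose_mul hle, ← hcoef, ← hpow]
  ring

end SimpleGraph

open Polynomial in
theorem signless_charpoly_xyz_zo_p {V : Type*} [Fintype V] (G : SimpleGraph V) (r n m : ℕ)
    (hn : Fintype.card V = n) (hm : Fintype.card G.edgeSet = m)
    (hreg : G.IsRegularOfDegree r) (hr2 : 2 ≤ r) (hn0 : 0 < n)
    (q : Fin n → ℝ)
    (hlast : q ⟨n - 1, by omega⟩ = 2 * r)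
    (hq : ∀ x : ℝ, fQ G x = ∏ i : Fin n, (x - q i)) :
    ∀ lam : ℝ,
      fQ (xyzTransform G XYZ.zero XYZ.one XYZ.plus) lam =
        ((lam - r) * (lam - 2 * m) - 2 * r) * (lam - m) ^ (m - n) *
          ∏ i : Fin (n - 1), ((lam - r) * (lam - m) - (q (Fin.castLE (Nat.sub_le n 1) i))) := by
  have hle : n ≤ m := by
    have hsum := hreg.card_mul_eq_two_mul_card_edgeSet
    rw [hn, hm] at hsum
    nlinarith
  set P : ℝ[X] := ((X - C (r : ℝ)) * (X - C (2 * m : ℝ)) - C (2 * r : ℝ)) *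
    (X - C (m : ℝ)) ^ (m - n) *
      ∏ i : Fin (n - 1), ((X - C (r : ℝ)) * (X - C (m : ℝ)) - C (q (Fin.castLE (Nat.sub_le n 1) i)))
  have hP : ∀ x, P.eval x = ((x - r) * (x - 2 * m) - 2 * r) * (x - m) ^ (m - n) *
      ∏ i : Fin (n - 1), ((x - r) * (x - m) - (q (Fin.castLE (Nat.sub_le n 1) i))) := by
    simp [P, eval_prod]
  have hcharpoly : (signlessLaplacian (xyzTransform G .zero .one .plus)).charpoly = P := by
    refine eq_of_forall_lt_eval_eq (m + 3 * r + 1) fun x hx => ?_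
    have hxr : 0 < x - r := by linarith
    have hs : 0 < (x - r) * (x - m) - 2 * r := by nlinarith
    subst hn hm
    rw [← fQ_eq_eval_charpoly, hP, ← mul_right_inj' hs.ne',
      G.mul_fQ_xyzTransform_zero_one_plus hreg hle hxr.ne' hs.ne', hq,
      Fin.prod_univ_eq_prod_castLE_mul hn0, hlast]
    ring
  intro lam
  rw [fQ_eq_eval_charpoly, hcharpoly, hP]
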